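/- Let 2 ≤ k ≤ n and suppose C(k,2) < C(n,2) − n²(k−2)/(2(k−1)) (as rational numbers). Let CL_k be the Boolean function on the C(n,2) edge-indicator variables of a simple graph on vertex set [n] that outputs 1 iff the graph contains a clique on k vertices. Then the minimum certificate complexity of CL_k satisfies C_min(CL_k) = C(k,2). -/

import Mathlib

/-- A deterministic decision tree over variables indexed by `ι`:
either a leaf labeled with an output bit, or an internal node that queries
variable `i` and branches on its value (`t0` if false, `t1` if true). -/
inductive DecTree (ι : Type) where
  | leaf (b : Bool)
  | node (i : ι) (t0 t1 : DecTree ι)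

namespace DecTree

variable {ι : Type}

/-- The output of a decision tree on input `x`. -/
def eval : DecTree ι → (ι → Bool) → Bool
  | leaf b, _ => b
  | node i t0 t1, x => if x i then t1.eval x else t0.eval x

/-- The number of queries (internal nodes visited) made by a decision tree on input `x`. -/
def queries : DecTree ι → (ι → Bool) → ℕ
  | leaf _, _ => 0
  | node i t0 t1, x => 1 + (if x i then t1.queries x else t0.queries x)

/-- The depth of a decision tree: the maximum number of queries over all inputs. -/
def depth : DecTree ι → ℕ
  | leaf _ => 0
  | node _ t0 t1 => 1 + max t0.depth t1.depth

end DecTree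

/-- A decision tree `T` computes `f` if its output agrees with `f` on every input. -/
def Computes {ι : Type} (T : DecTree ι) (f : (ι → Bool) → Bool) : Prop :=
  ∀ x, T.eval x = f x

/-- `S` is a certificate for input `x` w.r.t. `f`: every input agreeing with `x`
on all coordinates in `S` has the same function value as `x`. -/
def IsCert {ι : Type} (f : (ι → Bool) → Bool) (x : ι → Bool) (S : Finset ι) : Prop :=
  ∀ y : ι → Bool, (∀ i ∈ S, y i = x i) → f y = f x

/-- The certificate complexity `C(f,x)`: the minimum size of a certificate for `x`. -/
noncomputable def certC {ι : Type} (f : (ι → Bool) → Bool) (x : ι → Bool) : ℕ :=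
  sInf {k | ∃ S : Finset ι, S.card = k ∧ IsCert f x S}

/-- The minimum certificate complexity `C_min(f) = min_x C(f,x)`. -/
noncomputable def Cmin {ι : Type} (f : (ι → Bool) → Bool) : ℕ :=
  sInf {k | ∃ x : ι → Bool, certC f x = k}

/-- The deterministic query complexity `DT(f)`: the minimum depth of a decision
tree computing `f`. -/
noncomputable def DTC {ι : Type} (f : (ι → Bool) → Bool) : ℕ :=
  sInf {d | ∃ T : DecTree ι, Computes T f ∧ T.depth ≤ d}

/-- The Hamming weight of an input. -/
def wt {n : ℕ} (x : Fin n → Bool) : ℕ :=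
  (Finset.univ.filter fun i => x i = true).card

/-- The index set of edge-indicator variables: unordered pairs of distinct
vertices of `Fin n`. -/
def Edge (n : ℕ) : Type := {e : Sym2 (Fin n) // ¬ e.IsDiag}

instance (n : ℕ) : Fintype (Edge n) := by unfold Edge; infer_instance
instance (n : ℕ) : DecidableEq (Edge n) := by unfold Edge; infer_instance

/-- The simple graph on `[n]` determined by an edge-indicator input `x`. -/
def graphOf {n : ℕ} (x : Edge n → Bool) : SimpleGraph (Fin n) :=
  SimpleGraph.fromEdgeSet {e : Sym2 (Fin n) | ∃ h : ¬ e.IsDiag, x ⟨e, h⟩ = true}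

open scoped Classical in
/-- The connectivity property as a Boolean function of the edge indicators. -/
noncomputable def CONNb (n : ℕ) (x : Edge n → Bool) : Bool :=
  decide (graphOf x).Connected

open scoped Classical in
/-- The `k`-clique property as a Boolean function of the edge indicators. -/
noncomputable def CLb (n k : ℕ) (x : Edge n → Bool) : Bool :=
  decide (∃ s : Finset (Fin n), (graphOf x).IsNClique k s)

/-!
Any `k`-set of vertices of the complete graph spans `C(k,2)` edges, and these certify the
presence of a `k`-clique. Conversely let `S` certify an input `G`. If `G` has a `k`-clique,
so does the graph that agrees with `G` on `S` and has no other edges, hence `S` contains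
the `C(k,2)` edges of a `k`-clique. If `G` has none, neither has the graph that agrees with
`G` on `S` and contains every other pair; by Turán's theorem it has at most
`n²(k-2)/(2(k-1))` edges, so `|S| ≥ C(n,2) - n²(k-2)/(2(k-1)) > C(k,2)`.
-/

open Finset SimpleGraph

namespace SimpleGraph

variable {V : Type*} [Fintype V] {G : SimpleGraph V} [DecidableRel G.Adj] {r : ℕ}

theorem CliqueFree.mul_card_edgeFinset_le (hr : 0 < r) (cf : G.CliqueFree (r + 1)) :
    2 * r * #G.edgeFinset ≤ (r - 1) * Fintype.card V ^ 2 := by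
  obtain ⟨H, _, maxH⟩ := exists_isTuranMaximal (V := V) hr
  calc 2 * r * #G.edgeFinset ≤ 2 * r * #H.edgeFinset := Nat.mul_le_mul_left _ (maxH.2 cf)
    _ = 2 * r * #(turanGraph (Fintype.card V) r).edgeFinset := by
        rw [((isTuranMaximal_iff_nonempty_iso_turanGraph hr).mp maxH).some.card_edgeFinset_eq]
    _ ≤ _ := mul_card_edgeFinset_turanGraph_le

end SimpleGraph

section Certificate

variable {ι : Type} {f : (ι → Bool) → Bool} {x : ι → Bool} {S : Finset ι}

lemma IsCert.apply_piecewise [DecidableEq ι] (hS : IsCert f x S) (z : ι → Bool) :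
    f (S.piecewise x z) = f x :=
  hS _ fun _ hi => S.piecewise_eq_of_mem _ _ hi

lemma isCert_univ [Fintype ι] (f : (ι → Bool) → Bool) (x : ι → Bool) : IsCert f x univ :=
  fun _ hy => congrArg f (funext fun i => hy i (mem_univ i))

lemma exists_isCert_card_eq_certC [Fintype ι] (f : (ι → Bool) → Bool) (x : ι → Bool) :
    ∃ S, #S = certC f x ∧ IsCert f x S := by
  have hne : {k | ∃ S : Finset ι, #S = k ∧ IsCert f x S}.Nonempty :=
    ⟨_, univ, rfl, isCert_univ f x⟩
  exact Nat.sInf_mem hne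

lemma Cmin_eq_of_isCert [Fintype ι] {m : ℕ} (hlow : ∀ x S, IsCert f x S → m ≤ #S)
    (hS : IsCert f x S) (hcard : #S = m) : Cmin f = m := by
  have le_certC (y : ι → Bool) : m ≤ certC f y := by
    obtain ⟨T, hT, hcert⟩ := exists_isCert_card_eq_certC f y
    exact hT ▸ hlow y T hcert
  have hx : certC f x = m := (Nat.sInf_le (s := {k | ∃ S, #S = k ∧ IsCert f x S})
    ⟨S, hcard, hS⟩).antisymm (le_certC x)
  refine (Nat.sInf_le (s := {k | ∃ y, certC f y = k}) ⟨x, hx⟩).antisymm (le_csInf ⟨_, x, hx⟩ ?_)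
  rintro _ ⟨y, rfl⟩
  exact le_certC y

end Certificate

section Edge

variable {n : ℕ}

lemma card_edge : Fintype.card (Edge n) = n.choose 2 := by
  have := Sym2.card_subtype_not_diag (α := Fin n)
  rwa [Fintype.card_fin] at this

lemma mem_edgeSet_graphOf (x : Edge n → Bool) (e : Edge n) :
    e.1 ∈ (graphOf x).edgeSet ↔ x e = true := by
  rw [graphOf, edgeSet_fromEdgeSet]
  exact ⟨fun ⟨⟨_, h⟩, _⟩ => h, fun h => ⟨⟨e.2, h⟩, e.2⟩⟩

def edgesWithin (s : Finset (Fin n)) : Finset (Edge n) :=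
  univ.filter fun e => ∀ a ∈ e.1, a ∈ s

lemma card_edgesWithin (s : Finset (Fin n)) : #(edgesWithin s) = (#s).choose 2 := by
  rw [← Sym2.card_image_offDiag,
    ← card_image_of_injective (f := fun e : Edge n => e.1) (edgesWithin s) Subtype.val_injective]
  congr 1
  ext e
  induction e using Sym2.ind with
  | _ a b =>
    rw [mem_image, mem_image]
    constructor
    · rintro ⟨⟨_, hd⟩, he, rfl⟩
      have hs := (mem_filter.1 he).2
      exact ⟨(a, b), mem_offDiag.2 ⟨hs a (Sym2.mem_mk_left a b), hs b (Sym2.mem_mk_right a b),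
        by simpa using hd⟩, rfl⟩
    · rintro ⟨⟨c, d⟩, hcd, he⟩
      obtain ⟨hc, hd, hne⟩ := mem_offDiag.1 hcd
      refine ⟨⟨s(c, d), by simpa using hne⟩, mem_filter.2 ⟨mem_univ _, ?_⟩, he⟩
      rintro v hv
      rcases Sym2.mem_iff.1 hv with rfl | rfl <;> assumption

lemma isClique_graphOf_iff (x : Edge n → Bool) (s : Finset (Fin n)) :
    (graphOf x).IsClique (s : Set (Fin n)) ↔ ∀ e ∈ edgesWithin s, x e = true := by
  constructor
  · intro hs e he
    refine (mem_edgeSet_graphOf x e).1 ?_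
    have hsub := (mem_filter.1 he).2
    obtain ⟨e, hd⟩ := e
    induction e using Sym2.ind with
    | _ a b =>
      exact hs (hsub a (Sym2.mem_mk_left a b)) (hsub b (Sym2.mem_mk_right a b)) (by simpa using hd)
  · intro h a ha b hb hne
    have hd : ¬(s(a, b) : Sym2 (Fin n)).IsDiag := by simpa using hne
    refine (mem_edgeSet_graphOf x ⟨s(a, b), hd⟩).2 (h _ (mem_filter.2 ⟨mem_univ _, ?_⟩))
    rintro v hv
    rcases Sym2.mem_iff.1 hv with rfl | rfl <;> assumption

end Edge

section Clique

variable {n k : ℕ} {x : Edge n → Bool} {S : Finset (Edge n)}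

lemma CLb_eq_true_iff : CLb n k x = true ↔ ∃ s, (graphOf x).IsNClique k s := by
  simp [CLb]

lemma isCert_edgesWithin {K : Finset (Fin n)} (hK : #K = k) :
    IsCert (CLb n k) (fun _ => true) (edgesWithin K) := by
  have hclique (y : Edge n → Bool) (hy : ∀ e ∈ edgesWithin K, y e = true) : CLb n k y = true :=
    CLb_eq_true_iff.2 ⟨K, (isClique_graphOf_iff y K).2 hy, hK⟩
  exact fun y hy => (hclique y hy).trans (hclique _ fun _ _ => rfl).symm

lemma choose_two_le_card_of_isCert_of_CLb_eq_true (hS : IsCert (CLb n k) x S)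
    (hx : CLb n k x = true) : k.choose 2 ≤ #S := by
  classical
  set y := S.piecewise x fun _ => false
  obtain ⟨s, hs⟩ : ∃ s, (graphOf y).IsNClique k s := by
    rw [← CLb_eq_true_iff, hS.apply_piecewise, hx]
  have hsub : edgesWithin s ⊆ S := fun e he => by
    by_contra heS
    simpa [y, heS] using (isClique_graphOf_iff y s).1 hs.isClique e he
  calc k.choose 2 = #(edgesWithin s) := by rw [card_edgesWithin, hs.card_eq]
    _ ≤ #S := card_le_card hsub

lemma mul_choose_two_le_of_isCert_of_CLb_eq_false (hk : 2 ≤ k) (hS : IsCert (CLb n k) x S)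
    (hx : CLb n k x = false) :
    2 * (k - 1) * n.choose 2 ≤ (k - 2) * n ^ 2 + 2 * (k - 1) * #S := by
  classical
  set y := S.piecewise x fun _ => true
  have hfree : (graphOf y).CliqueFree (k - 1 + 1) := by
    rw [Nat.sub_add_cancel (by omega)]
    intro s hs
    have hy : CLb n k y = true := CLb_eq_true_iff.2 ⟨s, hs⟩
    rw [hS.apply_piecewise, hx] at hy
    exact Bool.false_ne_true hy
  have hturan := hfree.mul_card_edgeFinset_le (by omega)
  rw [Fintype.card_fin, show k - 1 - 1 = k - 2 by omega] at hturan
  have hedges : #Sᶜ ≤ #(graphOf y).edgeFinset :=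
    card_le_card_of_injOn (fun e : Edge n => e.1)
      (fun e he => by
        rw [mem_coe, mem_edgeFinset, mem_edgeSet_graphOf]
        simp [y, mem_compl.1 he])
      Subtype.val_injective.injOn
  rw [card_compl, card_edge] at hedges
  calc 2 * (k - 1) * n.choose 2 ≤ 2 * (k - 1) * (#(graphOf y).edgeFinset + #S) := by
        gcongr; omega
    _ ≤ (k - 2) * n ^ 2 + 2 * (k - 1) * #S := by rw [mul_add]; omega

lemma choose_two_le_card_of_isCert (hk : 2 ≤ k)
    (hsmall : (k.choose 2 : ℚ) <
      (n.choose 2 : ℚ) - (n : ℚ) ^ 2 * ((k : ℚ) - 2) / (2 * ((k : ℚ) - 1)))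
    (hS : IsCert (CLb n k) x S) : k.choose 2 ≤ #S := by
  cases hx : CLb n k x
  · have h := mul_choose_two_le_of_isCert_of_CLb_eq_false hk hS hx
    have hq := (Nat.cast_le (α := ℚ)).2 h
    push_cast [Nat.cast_sub (by omega : 1 ≤ k), Nat.cast_sub hk] at hq
    have hpos : (0 : ℚ) < 2 * ((k : ℚ) - 1) := by
      have : (2 : ℚ) ≤ k := by exact_mod_cast hk
      linarith
    have hdiff : (n.choose 2 : ℚ) - #S ≤ (n : ℚ) ^ 2 * ((k : ℚ) - 2) / (2 * ((k : ℚ) - 1)) := by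
      rw [le_div_iff₀ hpos]
      linarith
    have : (k.choose 2 : ℚ) < #S := by linarith
    exact_mod_cast this.le
  · exact choose_two_le_card_of_isCert_of_CLb_eq_true hS hx

end Clique

/-- For `2 ≤ k ≤ n` with `C(k,2) < C(n,2) - n²(k-2)/(2(k-1))`, the minimum
certificate complexity of the `k`-clique property is `C(k,2)`. -/
theorem clique_Cmin (n k : ℕ) (hk : 2 ≤ k) (hkn : k ≤ n)
    (hsmall : (k.choose 2 : ℚ) <
      (n.choose 2 : ℚ) - (n : ℚ) ^ 2 * ((k : ℚ) - 2) / (2 * ((k : ℚ) - 1))) :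
    Cmin (CLb n k) = k.choose 2 := by
  obtain ⟨K, -, hK⟩ := exists_subset_card_eq (s := (univ : Finset (Fin n))) (by simpa using hkn)
  refine Cmin_eq_of_isCert (fun x S hS => choose_two_le_card_of_isCert hk hsmall hS)
    (isCert_edgesWithin hK) ?_
  rw [card_edgesWithin, hK]
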